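/- Let H be a real Hilbert space, L a symmetric bounded operator on H, and L_v a family of bounded operators such that A_v := L − (1/2)(L_v + L_v*) satisfies: for every a, b > 0 there is δ > 0 with ‖A_v(z)‖ ≤ a‖z‖ + b‖(−εL)(z)‖ for all z whenever ‖v‖ < δ. If −L is semi-positive, then for every ε > 0 there is δ > 0 such that for ‖v‖ < δ, −⟨L_v z, z⟩ ≥ (1 − ε)⟨−L z, z⟩ − ε‖z‖² for all z. -/

import Mathlib

open scoped RealInnerProductSpace

/-- Cauchy–Schwarz for the semi-positive symmetric operator `-L`. -/
lemma cs_aux {H : Type*} [NormedAddCommGroup H] [InnerProductSpace ℝ H]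
    (L : H →L[ℝ] H) (hsymm : ∀ z w : H, ⟪L z, w⟫ = ⟪z, L w⟫)
    (hneg : ∀ z : H, ⟪L z, z⟫ ≤ 0) (z : H) :
    ‖L z‖ ^ 2 ≤ ‖L‖ * (-⟪L z, z⟫) := by
  set w := L z with hw
  have hquad : ∀ t : ℝ, 0 ≤ (-⟪L w, w⟫) * (t * t) + (-(2 * ‖w‖ ^ 2)) * t + (-⟪L z, z⟫) := by
    intro t
    have h0 := hneg (z + t • w)
    have hexp : ⟪L (z + t • w), z + t • w⟫
        = ⟪L z, z⟫ + 2 * t * ‖w‖ ^ 2 + t ^ 2 * ⟪L w, w⟫ := by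
      have h1 : ⟪L w, z⟫ = ‖w‖ ^ 2 := by
        rw [hsymm w z, ← hw, real_inner_self_eq_norm_sq]
      have h2 : ⟪L z, w⟫ = ‖w‖ ^ 2 := by
        rw [← hw, real_inner_self_eq_norm_sq]
      simp only [map_add, map_smul, inner_add_left, inner_add_right,
        inner_smul_left, inner_smul_right, RCLike.ofReal_real_eq_id, id_eq, starRingEnd_apply, star_trivial,
        h1, h2]
      ring
    nlinarith [h0, hexp]
  have hd := discrim_le_zero hquad
  rw [discrim] at hd
  have hb : -⟪L w, w⟫ ≤ ‖L‖ * ‖w‖ ^ 2 := by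
    have := abs_real_inner_le_norm (L w) w
    have hLw : ‖L w‖ ≤ ‖L‖ * ‖w‖ := L.le_opNorm w
    have habs : |⟪L w, w⟫| ≤ ‖L‖ * ‖w‖ * ‖w‖ :=
      this.trans (mul_le_mul_of_nonneg_right hLw (norm_nonneg w))
    nlinarith [abs_nonneg (⟪L w, w⟫), neg_abs_le (⟪L w, w⟫), le_abs_self (⟪L w, w⟫)]
  have hq : 0 ≤ -⟪L z, z⟫ := by linarith [hneg z]
  by_cases hw0 : ‖w‖ = 0
  · rw [hw0]
    nlinarith [mul_nonneg (norm_nonneg L) hq]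
  · have hwpos : 0 < ‖w‖ ^ 2 := by positivity
    nlinarith [hd, mul_le_mul_of_nonneg_right hb hq, mul_nonneg (mul_nonneg (norm_nonneg L) hq) hq]

/-- **Lemma 4.4 (abstract form).** Let `L` be a bounded symmetric operator on a real Hilbert
space with `−L` semi-positive, and let `L_v` be a family of bounded operators such that
`A_v = L − (1/2)(L_v + L_v*)` satisfies: for every `ε, a, b > 0` there is `δ > 0` with
`‖A_v z‖ ≤ a ‖z‖ + b ‖(−εL) z‖` for all `z` whenever `‖v‖ < δ`. Then for every `ε > 0` there
is `δ > 0` such that `‖v‖ < δ` implies `−⟪L_v z, z⟫ ≥ (1 − ε)⟪−L z, z⟫ − ε ‖z‖²` for all `z`. -/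
theorem perturbed_coercivity
    {H : Type*} [NormedAddCommGroup H] [InnerProductSpace ℝ H] [CompleteSpace H]
    {P : Type*} [NormedAddCommGroup P] [NormedSpace ℝ P]
    (L : H →L[ℝ] H)
    (hsymm : ∀ z w : H, ⟪L z, w⟫ = ⟪z, L w⟫)
    (hneg : ∀ z : H, ⟪L z, z⟫ ≤ 0)
    (Lv : P → (H →L[ℝ] H))
    (hA : ∀ ε a b : ℝ, 0 < ε → 0 < a → 0 < b → ∃ δ : ℝ, 0 < δ ∧
      ∀ v : P, ‖v‖ < δ → ∀ z : H,
        ‖(L - (1 / 2 : ℝ) • (Lv v + ContinuousLinearMap.adjoint (Lv v))) z‖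
          ≤ a * ‖z‖ + b * ‖((-ε) • L) z‖) :
    ∀ ε : ℝ, 0 < ε → ∃ δ : ℝ, 0 < δ ∧
      ∀ v : P, ‖v‖ < δ → ∀ z : H,
        (1 - ε) * (-⟪L z, z⟫) - ε * ‖z‖ ^ 2 ≤ -⟪Lv v z, z⟫ := by
  intro ε hε
  have hM1 : (0 : ℝ) < ‖L‖ + 1 := by positivity
  obtain ⟨δ, hδ, hbound⟩ := hA ε (ε / 2) (1 / (‖L‖ + 1)) hε (by positivity) (by positivity)
  refine ⟨δ, hδ, fun v hv z => ?_⟩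
  set A := L - (1 / 2 : ℝ) • (Lv v + ContinuousLinearMap.adjoint (Lv v)) with hAdef
  set q := -⟪L z, z⟫ with hqdef
  have hq : 0 ≤ q := by simp only [hqdef]; linarith [hneg z]
  -- key identity: ⟪A z, z⟫ = ⟪L z, z⟫ - ⟪Lv v z, z⟫
  have hadj : ⟪(ContinuousLinearMap.adjoint (Lv v)) z, z⟫ = ⟪Lv v z, z⟫ := by
    rw [ContinuousLinearMap.adjoint_inner_left, real_inner_comm]
  have hid : ⟪A z, z⟫ = ⟪L z, z⟫ - ⟪Lv v z, z⟫ := by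
    simp only [hAdef, ContinuousLinearMap.sub_apply, ContinuousLinearMap.smul_apply,
      ContinuousLinearMap.add_apply, inner_sub_left, inner_smul_left, inner_add_left,
      RCLike.ofReal_real_eq_id, id_eq, starRingEnd_apply, star_trivial, hadj]
    ring
  -- CS bound
  have hcs : ‖L z‖ ^ 2 ≤ ‖L‖ * q := cs_aux L hsymm hneg z
  have hAz := hbound v hv z
  have h1 : ‖((-ε) • L) z‖ = ε * ‖L z‖ := by
    simp [norm_smul, abs_of_pos hε]
  rw [h1] at hAz
  -- bound ‖L z‖ * ‖z‖ / (‖L‖+1)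
  have h6 : ‖L z‖ * ‖z‖ / (‖L‖ + 1) ≤ (q + ‖z‖ ^ 2) / 2 := by
    rw [div_le_div_iff₀ hM1 two_pos]
    nlinarith [sq_nonneg (‖L z‖ - (‖L‖ + 1) * ‖z‖), hcs, hq,
      mul_nonneg hq (sq_nonneg ‖L‖), mul_nonneg hq (norm_nonneg L), hM1]
  have habs : -(‖A z‖ * ‖z‖) ≤ ⟪A z, z⟫ := by
    have := abs_real_inner_le_norm (A z) z
    linarith [neg_abs_le (⟪A z, z⟫)]
  have h7 : ‖A z‖ * ‖z‖ ≤ (ε / 2 * ‖z‖ + 1 / (‖L‖ + 1) * (ε * ‖L z‖)) * ‖z‖ :=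
    mul_le_mul_of_nonneg_right hAz (norm_nonneg z)
  have h8 : ε * (‖L z‖ * ‖z‖ / (‖L‖ + 1)) ≤ ε * ((q + ‖z‖ ^ 2) / 2) :=
    mul_le_mul_of_nonneg_left h6 hε.le
  have hX : ‖A z‖ * ‖z‖ ≤ ε * q + ε * ‖z‖ ^ 2 := by
    have e1 : (ε / 2 * ‖z‖ + 1 / (‖L‖ + 1) * (ε * ‖L z‖)) * ‖z‖
        = ε / 2 * ‖z‖ ^ 2 + ε * (‖L z‖ * ‖z‖ / (‖L‖ + 1)) := by
      field_simp
    nlinarith [h7, h8, e1]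
  -- conclude
  have hfin : -⟪Lv v z, z⟫ = q + ⟪A z, z⟫ := by
    simp only [hqdef]; linarith [hid]
  rw [hfin]
  nlinarith [habs, hX]
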